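/- Let f and g be continuous functions on (0,∞) with g(t) > 0 for all t > 0, let μ be a positive, differentiable, strictly increasing function mapping (0,∞) onto (μ(0⁺),∞), and suppose F(x) = ∫_0^∞ f(t)·e^{−x·μ(t)} dt and G(x) = ∫_0^∞ g(t)·e^{−x·μ(t)} dt converge for every x > 0. Suppose there exists t* ∈ (0,∞) such that f/g is strictly increasing on (0,t*) and strictly decreasing on (t*,∞), and suppose lim_{x→0⁺} ( (F′(x)/G′(x))·G(x) − F(x) ) exists and is negative. Then there exists x* > 0 such that F/G is increasing on (0,x*) and decreasing on (x*,∞). -/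

import Mathlib

/-!
Write `A = -F'` and `B = -G'`: these are the transforms of `f μ` and `g μ`, and
`(F / G)' = G' H / G²` with `H = (F' / G') G - F` and `H' = (F' / G')' G`.
Since `f / g` is unimodal, `f - c g` is positive exactly on an interval for every `c`, so by the
variation-diminishing property of the kernel `exp (-x μ t)` the transform `A - c B` has no sign
pattern `+ - +`: the ratio `F' / G' = A / B` is quasiconcave. It is not monotone, because as
`x → ∞` the kernel concentrates at `t = 0`, where `f / g` increases. Hence `F' / G'` increases up
to some `v` and decreases after it; then `H` is nondecreasing on `(0, v]` and, as `F, G → 0` at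
`∞`, nonnegative beyond `v`. Since `H → L < 0` at `0⁺`, `H` changes sign exactly once, at `x*`,
and `F / G` increases before `x*` and decreases after it.
-/

open Real Filter Set MeasureTheory Topology

noncomputable def laplaceAlong (μ θ : ℝ → ℝ) (x : ℝ) : ℝ :=
  ∫ t in Ioi (0 : ℝ), θ t * exp (-x * μ t)

def LaplaceIntegrable (μ θ : ℝ → ℝ) : Prop :=
  ∀ x > (0 : ℝ), IntegrableOn (fun t => θ t * exp (-x * μ t)) (Ioi 0)

lemma mul_exp_neg_mul_le {s : ℝ} (hs : 0 < s) (m : ℝ) : m * exp (-s * m) ≤ s⁻¹ := by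
  rw [neg_mul, exp_neg, ← div_eq_mul_inv, div_le_iff₀ (exp_pos _), ← div_eq_inv_mul,
    le_div_iff₀ hs]
  linarith [add_one_le_exp (s * m)]

lemma setIntegral_pos_of_pos_on {X : Type*} [MeasurableSpace X] {ν : Measure X} {s : Set X}
    {f : X → ℝ} (hs : MeasurableSet s) (hs0 : ν s ≠ 0) (hf : IntegrableOn f s ν)
    (hpos : ∀ t ∈ s, 0 < f t) : 0 < ∫ t in s, f t ∂ν := by
  rw [setIntegral_pos_iff_support_of_nonneg_ae
    ((ae_restrict_iff' hs).2 (Eventually.of_forall fun t ht => (hpos t ht).le)) hf,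
    inter_eq_right.2 fun t ht => Function.mem_support.2 (hpos t ht).ne']
  exact pos_iff_ne_zero.2 hs0

lemma tendsto_setIntegral_mul_exp_atTop {s : Set ℝ} (hs : MeasurableSet s) {ν θ : ℝ → ℝ}
    (hν : ∀ t ∈ s, 0 < ν t) (hθ : ∀ x ≥ (1 : ℝ), IntegrableOn (fun t => θ t * exp (-x * ν t)) s) :
    Tendsto (fun x => ∫ t in s, θ t * exp (-x * ν t)) atTop (𝓝 0) := by
  have hlim := tendsto_integral_filter_of_dominated_convergence (μ := volume.restrict s)
    (f := fun _ => (0 : ℝ)) (fun t => ‖θ t * exp (-1 * ν t)‖)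
    ((eventually_ge_atTop 1).mono fun x hx => (hθ x hx).1) ?_ (hθ 1 le_rfl).norm ?_
  · simpa using hlim
  · refine (eventually_ge_atTop 1).mono fun x hx => ?_
    refine (ae_restrict_iff' hs).2 (Eventually.of_forall fun t ht => ?_)
    rw [norm_mul, norm_mul, Real.norm_of_nonneg (exp_pos _).le, Real.norm_of_nonneg (exp_pos _).le]
    gcongr
    nlinarith [hν t ht]
  · refine (ae_restrict_iff' hs).2 (Eventually.of_forall fun t ht => ?_)
    have : Tendsto (fun x => -x * ν t) atTop atBot :=
      tendsto_neg_atTop_atBot.atBot_mul_const (hν t ht)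
    simpa using (tendsto_exp_atBot.comp this).const_mul (θ t)

/-- As `x → ∞` the kernel `exp (-x * ν t)` concentrates on `{ν ≤ 0}`. -/
lemma eventually_setIntegral_pos {ν θ : ℝ → ℝ} {a : ℝ} (ha : 0 < a)
    (hν₀ : ∀ t ∈ Ioc 0 a, ν t ≤ 0) (hν : ∀ t ∈ Ioi a, 0 < ν t)
    (hint : ∀ x > (0 : ℝ), IntegrableOn (fun t => θ t * exp (-x * ν t)) (Ioi 0))
    (hpos : ∀ t ∈ Ioc 0 a, 0 < θ t) :
    ∀ᶠ x in atTop, 0 < ∫ t in Ioi 0, θ t * exp (-x * ν t) := by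
  have hnear_int : ∀ x > (0 : ℝ), IntegrableOn (fun t => θ t * exp (-x * ν t)) (Ioc 0 a) :=
    fun x hx => (hint x hx).mono_set Ioc_subset_Ioi_self
  have hfar_int : ∀ x > (0 : ℝ), IntegrableOn (fun t => θ t * exp (-x * ν t)) (Ioi a) :=
    fun x hx => (hint x hx).mono_set (Ioi_subset_Ioi ha.le)
  have hneg : ∀ x > (0 : ℝ), IntegrableOn (fun t => max (-θ t) 0 * exp (-x * ν t)) (Ioi a) :=
    fun x hx => (hfar_int x hx).neg_part.congr (Eventually.of_forall fun t => by
      simp only [max_mul_of_nonneg _ _ (exp_pos _).le, zero_mul, neg_mul])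
  set κ := ∫ t in Ioc 0 a, θ t * exp (-1 * ν t)
  have hκ : 0 < κ := setIntegral_pos_of_pos_on measurableSet_Ioc (by simp [ha])
    (hnear_int 1 one_pos) fun t ht => mul_pos (hpos t ht) (exp_pos _)
  have htail : Tendsto (fun x => ∫ t in Ioi a, max (-θ t) 0 * exp (-x * ν t)) atTop (𝓝 0) :=
    tendsto_setIntegral_mul_exp_atTop measurableSet_Ioi hν fun x hx => hneg x (by linarith)
  filter_upwards [htail.eventually_lt_const (half_pos hκ), eventually_ge_atTop 1] with x hx hx1
  have hx0 : 0 < x := by linarith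
  have hnear : κ ≤ ∫ t in Ioc 0 a, θ t * exp (-x * ν t) :=
    setIntegral_mono_on (hnear_int 1 one_pos) (hnear_int x hx0) measurableSet_Ioc fun t ht => by
      have := hν₀ t ht
      exact mul_le_mul_of_nonneg_left (exp_le_exp.2 (by nlinarith)) (hpos t ht).le
  have hfar : -∫ t in Ioi a, max (-θ t) 0 * exp (-x * ν t) ≤
      ∫ t in Ioi a, θ t * exp (-x * ν t) := by
    rw [← integral_neg]
    exact setIntegral_mono_on (hneg x hx0).neg (hfar_int x hx0) measurableSet_Ioi fun t _ => by
      nlinarith [le_max_left (-θ t) 0, exp_pos (-x * ν t)]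
  rw [← Ioc_union_Ioi_eq_Ioi ha.le, setIntegral_union Ioc_disjoint_Ioi_same measurableSet_Ioi
    (hnear_int x hx0) (hfar_int x hx0)]
  linarith

lemma Set.OrdConnected.forall_lt_or_forall_gt_of_notMem {S : Set ℝ} (hS : S.OrdConnected)
    {t : ℝ} (ht : t ∉ S) : (∀ s ∈ S, t < s) ∨ ∀ s ∈ S, s < t := by
  by_contra! h
  obtain ⟨⟨s₁, hs₁, h₁⟩, ⟨s₂, hs₂, h₂⟩⟩ := h
  exact ht (hS.out hs₁ hs₂ ⟨h₁, h₂⟩)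

lemma QuasiconcaveOn.congr {s : Set ℝ} {f g : ℝ → ℝ} (hf : QuasiconcaveOn ℝ s f)
    (h : EqOn f g s) : QuasiconcaveOn ℝ s g := fun r => by
  have : {x ∈ s | r ≤ g x} = {x ∈ s | r ≤ f x} :=
    Set.ext fun x => and_congr_right fun hx => by rw [h hx]
  exact this ▸ hf r

lemma QuasiconcaveOn.min_le {s : Set ℝ} {f : ℝ → ℝ} (hf : QuasiconcaveOn ℝ s f) {x y z : ℝ}
    (hx : x ∈ s) (hz : z ∈ s) (hy : y ∈ Icc x z) : min (f x) (f z) ≤ f y :=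
  ((hf _).ordConnected.out ⟨hx, min_le_left _ _⟩ ⟨hz, min_le_right _ _⟩ hy).2

lemma quasiconcaveOn_of_min_le {s : Set ℝ} (hs : s.OrdConnected) {f : ℝ → ℝ}
    (h : ∀ x ∈ s, ∀ z ∈ s, ∀ y ∈ Ioo x z, min (f x) (f z) ≤ f y) : QuasiconcaveOn ℝ s f := by
  intro r
  refine OrdConnected.convex ⟨fun x hx z hz y hy => ⟨hs.out hx.1 hz.1 hy, ?_⟩⟩
  rcases hy.1.eq_or_lt with rfl | hxy
  · exact hx.2
  rcases hy.2.eq_or_lt with rfl | hyz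
  · exact hz.2
  exact (le_min hx.2 hz.2).trans (h x hx.1 z hz.1 y ⟨hxy, hyz⟩)

lemma quasiconcaveOn_Ioi_of_strictMonoOn_strictAntiOn {f : ℝ → ℝ} {c : ℝ} (hc : 0 < c)
    (hcont : ContinuousAt f c) (hinc : StrictMonoOn f (Ioo 0 c)) (hdec : StrictAntiOn f (Ioi c)) :
    QuasiconcaveOn ℝ (Ioi 0) f := by
  have hmono : MonotoneOn f (Ioc 0 c) := by
    rw [← Ioo_insert_right hc]
    exact hinc.monotoneOn.insert_of_continuousWithinAt (right_nhdsWithin_Ioo_neBot hc)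
      hcont.continuousWithinAt
  have hanti : AntitoneOn f (Ici c) := by
    rw [← Ioi_insert]
    have := hdec.antitoneOn.neg.insert_of_continuousWithinAt (nhdsGT_neBot c)
      hcont.neg.continuousWithinAt
    exact fun a ha b hb hab => neg_le_neg_iff.1 (this ha hb hab)
  refine quasiconcaveOn_of_min_le ordConnected_Ioi fun x hx z hz y hy => ?_
  rcases le_total y c with hyc | hcy
  · exact (min_le_left _ _).trans (hmono ⟨hx, hy.1.le.trans hyc⟩ ⟨hx.trans hy.1, hyc⟩ hy.1.le)
  · exact (min_le_right _ _).trans (hanti hcy (hcy.trans hy.2.le) hy.2.le)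

lemma QuasiconcaveOn.exists_monotoneOn_antitoneOn {R : ℝ → ℝ} (hq : QuasiconcaveOn ℝ (Ioi 0) R)
    (hR : ¬ MonotoneOn R (Ioi 0)) :
    ∃ v ≥ (0 : ℝ), MonotoneOn R (Ioo 0 v) ∧ AntitoneOn R (Ioi v) := by
  set D := {v ∈ Ioi (0 : ℝ) | ∃ u ∈ Ioo 0 v, R v < R u}
  have hup : ∀ v ∈ D, ∀ p > v, p ∈ D ∧ R p ≤ R v := by
    rintro v ⟨hv, u, hu, huv⟩ p hp
    have hmin := hq.min_le hu.1 (mem_Ioi.2 (hv.trans hp)) ⟨hu.2.le, hp.le⟩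
    have hpv : R p ≤ R v := (min_le_iff.1 hmin).resolve_left huv.not_ge
    exact ⟨⟨hv.trans hp, u, ⟨hu.1, hu.2.trans hp⟩, hpv.trans_lt huv⟩, hpv⟩
  have hne : D.Nonempty := by
    simp only [MonotoneOn, not_forall, not_le] at hR
    obtain ⟨a, ha, b, hb, hab, hlt⟩ := hR
    exact ⟨b, hb, a, ⟨ha, hab.lt_of_ne (by rintro rfl; exact hlt.false)⟩, hlt⟩
  have hbdd : BddBelow D := ⟨0, fun v hv => hv.1.le⟩
  set v := sInf D
  have hD : ∀ w > v, w ∈ D := fun w hw => by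
    obtain ⟨d, hd, hdw⟩ := exists_lt_of_csInf_lt hne hw
    exact (hup d hd w hdw).1
  refine ⟨v, le_csInf hne fun w hw => hw.1.le, fun p hp q hq hpq => ?_, fun p hp q hq hpq => ?_⟩
  · by_contra! hlt
    have hq' : q ∈ D := ⟨hq.1, p, ⟨hp.1, hpq.lt_of_ne (by rintro rfl; exact hlt.false)⟩, hlt⟩
    exact (csInf_le hbdd hq').not_gt hq.2
  · rcases hpq.eq_or_lt with rfl | hpq
    · exact le_rfl
    · exact (hup p (hD p hp) q hpq).2

lemma exists_neg_on_Ioo_nonneg_on_Ioi {H : ℝ → ℝ} {v : ℝ} (hmono : MonotoneOn H (Ioc 0 v))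
    (hnn : ∀ x > v, 0 ≤ H x) (hneg : ∃ x > 0, H x < 0) :
    ∃ xs > (0 : ℝ), (∀ x ∈ Ioo 0 xs, H x < 0) ∧ ∀ x > xs, 0 ≤ H x := by
  set N := {x ∈ Ioi (0 : ℝ) | H x < 0}
  have hNv : ∀ x ∈ N, x ≤ v := fun x hx => not_lt.1 fun h => (hnn x h).not_gt hx.2
  have hbdd : BddAbove N := ⟨v, hNv⟩
  obtain ⟨x₀, hx₀, hHx₀⟩ := hneg
  refine ⟨sSup N, hx₀.trans_le (le_csSup hbdd ⟨hx₀, hHx₀⟩), fun x hx => ?_,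
    fun x hx => not_lt.1 fun h => (le_csSup hbdd ⟨?_, h⟩).not_gt hx⟩
  · obtain ⟨q, hq, hxq⟩ := exists_lt_of_lt_csSup (⟨x₀, hx₀, hHx₀⟩ : N.Nonempty) hx.2
    exact (hmono ⟨hx.1, hxq.le.trans (hNv q hq)⟩ ⟨hq.1, hNv q hq⟩ hxq.le).trans_lt hq.2
  · exact hx₀.trans_le ((le_csSup hbdd ⟨hx₀, hHx₀⟩).trans hx.le)

namespace LaplaceIntegrable

variable {μ θ φ : ℝ → ℝ}

lemma sub (hθ : LaplaceIntegrable μ θ) (hφ : LaplaceIntegrable μ φ) :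
    LaplaceIntegrable μ (fun t => θ t - φ t) := fun x hx =>
  ((hθ x hx).sub (hφ x hx)).congr (Eventually.of_forall fun t => by simp only [Pi.sub_apply]; ring)

lemma const_mul (hθ : LaplaceIntegrable μ θ) (c : ℝ) :
    LaplaceIntegrable μ (fun t => c * θ t) := fun x hx =>
  ((hθ x hx).const_mul c).congr (Eventually.of_forall fun t => by ring)

lemma mul_mu (hμ : ∀ t ∈ Ioi (0 : ℝ), 0 ≤ μ t)
    (hμm : AEStronglyMeasurable μ (volume.restrict (Ioi 0))) (hθ : LaplaceIntegrable μ θ) :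
    LaplaceIntegrable μ (fun t => θ t * μ t) := by
  intro x hx
  have hx2 : 0 < x / 2 := by positivity
  refine (((hθ _ hx2).norm.const_mul (x / 2)⁻¹)).mono' ?_ ?_
  · exact ((hθ x hx).1.mul hμm).congr
      (Eventually.of_forall fun t => by simp only [Pi.mul_apply]; ring)
  · refine (ae_restrict_iff' measurableSet_Ioi).2 (Eventually.of_forall fun t ht => ?_)
    calc ‖θ t * μ t * exp (-x * μ t)‖
        = (μ t * exp (-(x / 2) * μ t)) * ‖θ t * exp (-(x / 2) * μ t)‖ := by
          rw [norm_mul, norm_mul, norm_mul, Real.norm_of_nonneg (hμ t ht),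
            Real.norm_of_nonneg (exp_pos _).le, Real.norm_of_nonneg (exp_pos _).le,
            show -x * μ t = -(x / 2) * μ t + -(x / 2) * μ t by ring, exp_add]
          ring
      _ ≤ (x / 2)⁻¹ * ‖θ t * exp (-(x / 2) * μ t)‖ := by
          gcongr; exact mul_exp_neg_mul_le hx2 (μ t)

lemma mul_sub_mu (hμ : ∀ t ∈ Ioi (0 : ℝ), 0 ≤ μ t)
    (hμm : AEStronglyMeasurable μ (volume.restrict (Ioi 0))) (hθ : LaplaceIntegrable μ θ)
    (α : ℝ) : LaplaceIntegrable μ (fun t => θ t * (α - μ t)) := by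
  have h := (hθ.const_mul α).sub (hθ.mul_mu hμ hμm)
  convert h using 2 with t
  ring

end LaplaceIntegrable

namespace laplaceAlong

variable {μ θ φ : ℝ → ℝ}

lemma sub (hθ : LaplaceIntegrable μ θ) (hφ : LaplaceIntegrable μ φ) {x : ℝ} (hx : 0 < x) :
    laplaceAlong μ (fun t => θ t - φ t) x = laplaceAlong μ θ x - laplaceAlong μ φ x := by
  simp only [laplaceAlong, sub_mul]
  exact integral_sub (hθ x hx) (hφ x hx)

lemma const_mul (c : ℝ) (x : ℝ) :
    laplaceAlong μ (fun t => c * θ t) x = c * laplaceAlong μ θ x := by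
  simp only [laplaceAlong, mul_assoc]
  exact integral_const_mul c _

lemma hasDerivAt (hμ : ∀ t ∈ Ioi (0 : ℝ), 0 ≤ μ t)
    (hμm : AEStronglyMeasurable μ (volume.restrict (Ioi 0))) (hθ : LaplaceIntegrable μ θ)
    {x : ℝ} (hx : 0 < x) :
    HasDerivAt (laplaceAlong μ θ) (-laplaceAlong μ (fun t => θ t * μ t) x) x := by
  have hθμ := hθ.mul_mu hμ hμm
  have key := hasDerivAt_integral_of_dominated_loc_of_deriv_le
    (μ := volume.restrict (Ioi 0)) (F := fun y t => θ t * exp (-y * μ t))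
    (F' := fun y t => -(θ t * μ t * exp (-y * μ t)))
    (bound := fun t => ‖θ t * μ t * exp (-(x / 2) * μ t)‖)
    (Metric.ball_mem_nhds x (by positivity : 0 < x / 2))
    (eventually_of_mem (Ioi_mem_nhds hx) fun y hy => (hθ y hy).1) (hθ x hx) (hθμ x hx).1.neg
    ?_ (hθμ _ (by positivity)).norm ?_
  · rw [integral_neg] at key
    exact key.2
  · refine (ae_restrict_iff' measurableSet_Ioi).2 (Eventually.of_forall fun t ht y hy => ?_)
    have hy' : x / 2 < y := by
      have := (abs_lt.1 (mem_ball_iff_norm.1 hy)).1; linarith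
    rw [norm_neg, norm_mul, norm_mul (θ t * μ t)]
    gcongr
    rw [Real.norm_of_nonneg (exp_pos _).le, Real.norm_of_nonneg (exp_pos _).le]
    exact exp_le_exp.2 (by nlinarith [hμ t ht])
  · refine Eventually.of_forall fun t y _ => ?_
    have := ((hasDerivAt_neg y).mul_const (μ t)).exp.const_mul (θ t)
    exact this.congr_deriv (by ring)

lemma pos (hθ : ∀ t ∈ Ioi (0 : ℝ), 0 < θ t) {x : ℝ}
    (hint : IntegrableOn (fun t => θ t * exp (-x * μ t)) (Ioi 0)) :
    0 < laplaceAlong μ θ x :=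
  setIntegral_pos_of_pos_on measurableSet_Ioi (by simp) hint fun t ht =>
    mul_pos (hθ t ht) (exp_pos _)

lemma eventually_pos (hμ : StrictMonoOn μ (Ioi 0)) (hθ : LaplaceIntegrable μ θ) {a : ℝ}
    (ha : 0 < a) (hpos : ∀ t ∈ Ioc 0 a, 0 < θ t) :
    ∀ᶠ x in atTop, 0 < laplaceAlong μ θ x := by
  have hshift : ∀ x t, exp (x * μ a) * (θ t * exp (-x * μ t)) =
      θ t * exp (-x * (μ t - μ a)) := fun x t => by
    rw [mul_left_comm, ← exp_add]; ring_nf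
  have hev := eventually_setIntegral_pos ha (fun t ht => sub_nonpos.2 (hμ.monotoneOn ht.1 ha ht.2))
    (fun t ht => sub_pos.2 (hμ ha (ha.trans ht) ht)) (fun x hx =>
      ((hθ x hx).const_mul (exp (x * μ a))).congr (Eventually.of_forall (hshift x))) hpos
  filter_upwards [hev] with x hx
  rw [← integral_congr_ae (Eventually.of_forall (hshift x)), integral_const_mul] at hx
  exact pos_of_mul_pos_right hx (exp_pos _).le

lemma hasDerivAt_exp_mul (hμ : ∀ t ∈ Ioi (0 : ℝ), 0 ≤ μ t)
    (hμm : AEStronglyMeasurable μ (volume.restrict (Ioi 0))) (hθ : LaplaceIntegrable μ θ)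
    (α : ℝ) {x : ℝ} (hx : 0 < x) :
    HasDerivAt (fun w => exp (w * α) * laplaceAlong μ θ w)
      (exp (x * α) * laplaceAlong μ (fun t => θ t * (α - μ t)) x) x := by
  have hsplit : laplaceAlong μ (fun t => θ t * (α - μ t)) x =
      α * laplaceAlong μ θ x - laplaceAlong μ (fun t => θ t * μ t) x := by
    rw [← const_mul, ← sub (hθ.const_mul α) (hθ.mul_mu hμ hμm) hx]
    congr 1 with t
    ring
  rw [hsplit]
  exact ((hasDerivAt_mul_const α).exp.mul (hasDerivAt hμ hμm hθ hx)).congr_deriv (by ring)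

lemma antitoneOn_exp_mul (hμ : ∀ t ∈ Ioi (0 : ℝ), 0 ≤ μ t)
    (hμm : AEStronglyMeasurable μ (volume.restrict (Ioi 0))) (hθ : LaplaceIntegrable μ θ)
    {α : ℝ} (hsign : ∀ t ∈ Ioi (0 : ℝ), 0 ≤ θ t * (μ t - α)) :
    AntitoneOn (fun w => exp (w * α) * laplaceAlong μ θ w) (Ioi 0) := by
  have hd := fun x (hx : x ∈ Ioi (0 : ℝ)) => hasDerivAt_exp_mul hμ hμm hθ α hx
  refine antitoneOn_of_hasDerivWithinAt_nonpos (convex_Ioi 0)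
    (fun x hx => (hd x hx).continuousAt.continuousWithinAt)
    (fun x hx => (hd x (interior_subset hx)).hasDerivWithinAt) fun x _ => ?_
  refine mul_nonpos_of_nonneg_of_nonpos (exp_pos _).le
    (setIntegral_nonpos measurableSet_Ioi fun t ht => ?_)
  have hneg : θ t * (α - μ t) ≤ 0 := by linarith [hsign t ht]
  exact mul_nonpos_of_nonpos_of_nonneg hneg (exp_pos _).le

/-- `hsign` says that `θ` has the sign pattern `- + -` in the variable `μ t`. After tilting by
`exp (x * β)` the derivative is the transform of `θ * (β - μ)`, which changes sign only once. -/
lemma pos_of_two_sign_changes (hμ : ∀ t ∈ Ioi (0 : ℝ), 0 ≤ μ t)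
    (hμm : AEStronglyMeasurable μ (volume.restrict (Ioi 0))) (hθ : LaplaceIntegrable μ θ)
    {α β : ℝ} (hsign : ∀ t ∈ Ioi (0 : ℝ), 0 ≤ θ t * (μ t - α) * (β - μ t))
    {x y z : ℝ} (hx : 0 < x) (hxy : x < y) (hyz : y < z)
    (hTx : 0 < laplaceAlong μ θ x) (hTz : 0 < laplaceAlong μ θ z) :
    0 < laplaceAlong μ θ y := by
  by_contra! hTy
  set ψ := fun w => exp (w * β) * laplaceAlong μ θ w
  set χ := laplaceAlong μ (fun t => θ t * (β - μ t))
  have hψ : ∀ w ∈ Ioi (0 : ℝ), HasDerivAt ψ (exp (w * β) * χ w) w := fun w hw =>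
    hasDerivAt_exp_mul hμ hμm hθ β hw
  have hy : 0 < y := hx.trans hxy
  obtain ⟨u, hu, hu'⟩ := exists_hasDerivAt_eq_slope ψ _ hxy
    (fun w hw => (hψ w (hx.trans_le hw.1)).continuousAt.continuousWithinAt)
    (fun w hw => hψ w (hx.trans hw.1))
  obtain ⟨v, hv, hv'⟩ := exists_hasDerivAt_eq_slope ψ _ hyz
    (fun w hw => (hψ w (hy.trans_le hw.1)).continuousAt.continuousWithinAt)
    (fun w hw => hψ w (hy.trans hw.1))
  have hψx : 0 < ψ x := mul_pos (exp_pos _) hTx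
  have hψy : ψ y ≤ 0 := mul_nonpos_of_nonneg_of_nonpos (exp_pos _).le hTy
  have hψz : 0 < ψ z := mul_pos (exp_pos _) hTz
  have hχu : χ u < 0 := by
    have : exp (u * β) * χ u < 0 := by
      rw [hu']; exact div_neg_of_neg_of_pos (by linarith) (by linarith)
    exact neg_of_mul_neg_right this (exp_pos _).le
  have hχv : 0 < χ v := by
    have : 0 < exp (v * β) * χ v := by
      rw [hv']; exact div_pos (by linarith) (by linarith)
    exact pos_of_mul_pos_right this (exp_pos _).le
  have hanti := antitoneOn_exp_mul hμ hμm (hθ.mul_sub_mu hμ hμm β) (α := α)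
    fun t ht => by linarith [hsign t ht]
  have := hanti (mem_Ioi.2 (hx.trans hu.1)) (mem_Ioi.2 (hy.trans hv.1)) (hu.2.trans hv.1).le
  simp only at this
  nlinarith [exp_pos (u * α), exp_pos (v * α)]

theorem pos_of_ordConnected (hμ : ∀ t ∈ Ioi (0 : ℝ), 0 ≤ μ t)
    (hμm : AEStronglyMeasurable μ (volume.restrict (Ioi 0))) (hμmono : StrictMonoOn μ (Ioi 0))
    (hθ : LaplaceIntegrable μ θ) (hS : {t ∈ Ioi (0 : ℝ) | 0 < θ t}.OrdConnected)
    {x y z : ℝ} (hx : 0 < x) (hxy : x < y) (hyz : y < z)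
    (hTx : 0 < laplaceAlong μ θ x) (hTz : 0 < laplaceAlong μ θ z) :
    0 < laplaceAlong μ θ y := by
  set S := {t ∈ Ioi (0 : ℝ) | 0 < θ t}
  have hθS : ∀ t ∈ Ioi (0 : ℝ), t ∉ S → θ t ≤ 0 := fun t ht htS => not_lt.1 fun h => htS ⟨ht, h⟩
  have hside : ∀ t ∈ Ioi (0 : ℝ), t ∉ S → (∀ s ∈ S, μ t < μ s) ∨ ∀ s ∈ S, μ s < μ t :=
    fun t ht htS => (hS.forall_lt_or_forall_gt_of_notMem htS).imp
      (fun h s hs => hμmono ht hs.1 (h s hs)) fun h s hs => hμmono hs.1 ht (h s hs)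
  rcases S.eq_empty_or_nonempty with hempty | hne
  · have : laplaceAlong μ θ x ≤ 0 := setIntegral_nonpos measurableSet_Ioi fun t ht =>
      mul_nonpos_of_nonpos_of_nonneg (hθS t ht (by simp [hempty])) (exp_pos _).le
    linarith
  have hbdd : BddBelow (μ '' S) := ⟨0, by rintro _ ⟨t, ht, rfl⟩; exact hμ t ht.1⟩
  set α := sInf (μ '' S)
  have hαS : ∀ t ∈ S, α ≤ μ t := fun t htS => csInf_le hbdd (mem_image_of_mem μ htS)
  have hbelow : ∀ t, (∀ s ∈ S, μ t < μ s) → μ t ≤ α := fun t h =>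
    le_csInf (hne.image μ) (by rintro _ ⟨s, hs, rfl⟩; exact (h s hs).le)
  by_cases hbdd' : BddAbove (μ '' S)
  · set β := sSup (μ '' S)
    have hαβ : α ≤ β := csInf_le_csSup (hne.image μ) hbdd hbdd'
    refine pos_of_two_sign_changes hμ hμm hθ (α := α) (β := β) (fun t ht => ?_) hx hxy hyz hTx hTz
    by_cases htS : t ∈ S
    · have := htS.2
      have := hαS t htS
      have := le_csSup hbdd' (mem_image_of_mem μ htS)
      positivity
    · have hout : (μ t - α) * (β - μ t) ≤ 0 := by
        rcases hside t ht htS with h | h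
        · exact mul_nonpos_of_nonpos_of_nonneg (sub_nonpos.2 (hbelow t h))
            (by linarith [hbelow t h])
        · have : β ≤ μ t := csSup_le (hne.image μ) (by rintro _ ⟨s, hs, rfl⟩; exact (h s hs).le)
          exact mul_nonpos_of_nonneg_of_nonpos (by linarith) (sub_nonpos.2 this)
      rw [mul_assoc]
      exact mul_nonneg_of_nonpos_of_nonpos (hθS t ht htS) hout
  · have hanti := antitoneOn_exp_mul hμ hμm hθ (α := α) fun t ht => by
      by_cases htS : t ∈ S
      · exact mul_nonneg htS.2.le (sub_nonneg.2 (hαS t htS))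
      · refine mul_nonneg_of_nonpos_of_nonpos (hθS t ht htS) (sub_nonpos.2 (hbelow t ?_))
        refine (hside t ht htS).resolve_right fun h => hbdd' ⟨μ t, ?_⟩
        rintro _ ⟨s, hs, rfl⟩
        exact (h s hs).le
    by_contra! hTy
    have := hanti (mem_Ioi.2 (hx.trans hxy)) (mem_Ioi.2 (hx.trans (hxy.trans hyz))) hyz.le
    simp only at this
    nlinarith [exp_pos (y * α), exp_pos (z * α)]

end laplaceAlong

section Ratio

variable {μ f g : ℝ → ℝ}

theorem quasiconcaveOn_laplaceAlong_div (hμ : ∀ t ∈ Ioi (0 : ℝ), 0 ≤ μ t)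
    (hμm : AEStronglyMeasurable μ (volume.restrict (Ioi 0))) (hμmono : StrictMonoOn μ (Ioi 0))
    (hf : LaplaceIntegrable μ f) (hg : LaplaceIntegrable μ g) (hgpos : ∀ t ∈ Ioi (0 : ℝ), 0 < g t)
    (hq : QuasiconcaveOn ℝ (Ioi 0) (fun t => f t / g t)) :
    QuasiconcaveOn ℝ (Ioi 0) (fun x => laplaceAlong μ f x / laplaceAlong μ g x) := by
  refine quasiconcaveOn_of_min_le ordConnected_Ioi fun x hx z hz y hy => ?_
  by_contra! hlt
  set c := laplaceAlong μ f y / laplaceAlong μ g y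
  have hy0 : 0 < y := mem_Ioi.1 hx |>.trans hy.1
  have hT : ∀ w > (0 : ℝ), laplaceAlong μ (fun t => f t - c * g t) w =
      laplaceAlong μ g w * (laplaceAlong μ f w / laplaceAlong μ g w - c) := fun w hw => by
    rw [laplaceAlong.sub hf (hg.const_mul c) hw, laplaceAlong.const_mul,
      mul_sub, mul_div_cancel₀ _ (laplaceAlong.pos hgpos (hg w hw)).ne']
    ring
  have hS : {t ∈ Ioi (0 : ℝ) | 0 < f t - c * g t}.OrdConnected := by
    have : {t ∈ Ioi (0 : ℝ) | 0 < f t - c * g t} = {t ∈ Ioi (0 : ℝ) | c < f t / g t} :=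
      Set.ext fun t => and_congr_right fun ht => by rw [lt_div_iff₀ (hgpos t ht), sub_pos]
    exact this ▸ (hq.convex_gt c).ordConnected
  have hpos : ∀ w > (0 : ℝ), c < laplaceAlong μ f w / laplaceAlong μ g w →
      0 < laplaceAlong μ (fun t => f t - c * g t) w := fun w hw h => by
    rw [hT w hw]; exact mul_pos (laplaceAlong.pos hgpos (hg w hw)) (sub_pos.2 h)
  have := laplaceAlong.pos_of_ordConnected hμ hμm hμmono (hf.sub (hg.const_mul c)) hS hx hy.1
    hy.2 (hpos x hx (lt_min_iff.1 hlt).1) (hpos z hz (lt_min_iff.1 hlt).2)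
  rw [hT y hy0, sub_self, mul_zero] at this
  exact this.false

lemma eventually_lt_laplaceAlong_div (hμmono : StrictMonoOn μ (Ioi 0)) (hf : LaplaceIntegrable μ f)
    (hg : LaplaceIntegrable μ g) (hgpos : ∀ t ∈ Ioi (0 : ℝ), 0 < g t) {a b : ℝ} (ha : 0 < a)
    (hb : ∀ t ∈ Ioc 0 a, b < f t / g t) :
    ∀ᶠ x in atTop, b < laplaceAlong μ f x / laplaceAlong μ g x := by
  filter_upwards [laplaceAlong.eventually_pos hμmono (hf.sub (hg.const_mul b)) ha fun t ht =>
      sub_pos.2 ((lt_div_iff₀ (hgpos t ht.1)).1 (hb t ht)), eventually_gt_atTop 0] with x hx hx0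
  rw [laplaceAlong.sub hf (hg.const_mul b) hx0, laplaceAlong.const_mul, sub_pos] at hx
  exact (lt_div_iff₀ (laplaceAlong.pos hgpos (hg x hx0))).2 hx

lemma eventually_laplaceAlong_div_lt (hμmono : StrictMonoOn μ (Ioi 0)) (hf : LaplaceIntegrable μ f)
    (hg : LaplaceIntegrable μ g) (hgpos : ∀ t ∈ Ioi (0 : ℝ), 0 < g t) {a b : ℝ} (ha : 0 < a)
    (hb : ∀ t ∈ Ioc 0 a, f t / g t < b) :
    ∀ᶠ x in atTop, laplaceAlong μ f x / laplaceAlong μ g x < b := by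
  filter_upwards [laplaceAlong.eventually_pos hμmono ((hg.const_mul b).sub hf) ha fun t ht =>
      sub_pos.2 ((div_lt_iff₀ (hgpos t ht.1)).1 (hb t ht)), eventually_gt_atTop 0] with x hx hx0
  rw [laplaceAlong.sub (hg.const_mul b) hf hx0, laplaceAlong.const_mul, sub_pos] at hx
  exact (div_lt_iff₀ (laplaceAlong.pos hgpos (hg x hx0))).2 hx

/-- As `x → ∞` the ratio is eventually below every value of `f / g` on `(0, c)` but above their
infimum, which a nondecreasing function cannot achieve. -/
theorem not_monotoneOn_laplaceAlong_div (hμmono : StrictMonoOn μ (Ioi 0))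
    (hf : LaplaceIntegrable μ f) (hg : LaplaceIntegrable μ g) (hgpos : ∀ t ∈ Ioi (0 : ℝ), 0 < g t)
    {c : ℝ} (hc : 0 < c) (hinc : StrictMonoOn (fun t => f t / g t) (Ioo 0 c)) :
    ¬ MonotoneOn (fun x => laplaceAlong μ f x / laplaceAlong μ g x) (Ioi 0) := by
  intro hM
  set R := fun x => laplaceAlong μ f x / laplaceAlong μ g x
  set ρ := fun t => f t / g t
  have hbelow : ∀ s ∈ Ioo 0 c, ∀ᶠ x in atTop, R x < ρ s := fun s hs =>
    have hts : ∀ t ∈ Ioc 0 (s / 2), t < s := fun t ht => ht.2.trans_lt (half_lt_self hs.1)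
    eventually_laplaceAlong_div_lt hμmono hf hg hgpos (half_pos hs.1) fun t ht =>
      hinc ⟨ht.1, (hts t ht).trans hs.2⟩ hs (hts t ht)
  have hlow : ∀ s ∈ Ioo 0 c, R 1 ≤ ρ s := fun s hs => by
    obtain ⟨x, hx, hx1⟩ := ((hbelow s hs).and (eventually_ge_atTop 1)).exists
    exact (hM (mem_Ioi.2 one_pos) (mem_Ioi.2 (one_pos.trans_le hx1)) hx1).trans hx.le
  have hne : (ρ '' Ioo 0 c).Nonempty := (nonempty_Ioo.2 hc).image ρ
  have hbdd : BddBelow (ρ '' Ioo 0 c) := ⟨R 1, by rintro _ ⟨s, hs, rfl⟩; exact hlow s hs⟩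
  set b := sInf (ρ '' Ioo 0 c)
  have habove : ∀ᶠ x in atTop, b < R x :=
    eventually_lt_laplaceAlong_div hμmono hf hg hgpos (half_pos hc) fun t ht => by
      have ht' : t ∈ Ioo 0 c := ⟨ht.1, ht.2.trans_lt (half_lt_self hc)⟩
      have hhalf : t / 2 ∈ Ioo 0 c := ⟨half_pos ht.1, (half_lt_self ht.1).trans ht'.2⟩
      exact (csInf_le hbdd (mem_image_of_mem ρ hhalf)).trans_lt
        (hinc hhalf ht' (half_lt_self ht.1))
  obtain ⟨x₁, hx₁, hx₁1⟩ := (habove.and (eventually_ge_atTop 1)).exists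
  obtain ⟨_, ⟨s, hs, rfl⟩, hs'⟩ := exists_lt_of_csInf_lt hne hx₁
  obtain ⟨x, hx, hxx₁⟩ := ((hbelow s hs).and (eventually_ge_atTop x₁)).exists
  have hx₁0 : (0 : ℝ) < x₁ := one_pos.trans_le hx₁1
  linarith [hM (mem_Ioi.2 hx₁0) (mem_Ioi.2 (hx₁0.trans_le hxx₁)) hxx₁]

end Ratio

section LHopital

variable {F G F' G' : ℝ → ℝ}

/-- The function `H_{F,G}` of the paper, with the derivatives `F'`, `G'` passed explicitly. -/
noncomputable def lhopitalH (F G F' G' : ℝ → ℝ) (x : ℝ) : ℝ := F' x / G' x * G x - F x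

lemma hasDerivAt_lhopitalH {x r : ℝ} (hF : HasDerivAt F (F' x) x) (hG : HasDerivAt G (G' x) x)
    (hR : HasDerivAt (fun w => F' w / G' w) r x) (hG' : G' x ≠ 0) :
    HasDerivAt (lhopitalH F G F' G') (r * G x) x :=
  ((hR.mul hG).sub hF).congr_deriv (by field_simp; ring)

lemma hasDerivAt_div_eq_mul_lhopitalH {x : ℝ} (hF : HasDerivAt F (F' x) x)
    (hG : HasDerivAt G (G' x) x) (hGx : G x ≠ 0) (hG' : G' x ≠ 0) :
    HasDerivAt (fun w => F w / G w) (G' x * lhopitalH F G F' G' x / G x ^ 2) x :=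
  (hF.div hG hGx).congr_deriv (by rw [lhopitalH]; field_simp)

lemma lhopitalH_nonneg_of_antitoneOn {x : ℝ} (hF : ∀ w ∈ Ici x, HasDerivAt F (F' w) w)
    (hG : ∀ w ∈ Ici x, HasDerivAt G (G' w) w) (hG' : ∀ w ∈ Ici x, G' w < 0)
    (hF0 : Tendsto F atTop (𝓝 0)) (hG0 : Tendsto G atTop (𝓝 0))
    (hR : AntitoneOn (fun w => F' w / G' w) (Ici x)) :
    0 ≤ lhopitalH F G F' G' x := by
  set c := F' x / G' x
  have hφ : ∀ w ∈ Ici x, HasDerivAt (fun w => c * G w - F w) (G' w * (c - F' w / G' w)) w :=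
    fun w hw => ((hG w hw).const_mul c).sub (hF w hw) |>.congr_deriv (by
      field_simp [(hG' w hw).ne])
  have hanti : AntitoneOn (fun w => c * G w - F w) (Ici x) :=
    antitoneOn_of_hasDerivWithinAt_nonpos (convex_Ici x)
      (fun w hw => (hφ w hw).continuousAt.continuousWithinAt)
      (fun w hw => (hφ w (interior_subset hw)).hasDerivWithinAt) fun w hw => by
        rw [interior_Ici] at hw
        exact mul_nonpos_of_nonpos_of_nonneg (hG' w (mem_Ici.2 hw.le)).le
          (sub_nonneg.2 (hR self_mem_Ici (mem_Ici.2 hw.le) hw.le))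
  have hlim : Tendsto (fun w => c * G w - F w) atTop (𝓝 0) := by
    simpa using (hG0.const_mul c).sub hF0
  exact le_of_tendsto hlim ((eventually_ge_atTop x).mono fun w hw => hanti self_mem_Ici hw hw)

lemma monotoneOn_div_of_lhopitalH_nonpos {s : Set ℝ} (hs : Convex ℝ s)
    (hF : ∀ x ∈ s, HasDerivAt F (F' x) x) (hG : ∀ x ∈ s, HasDerivAt G (G' x) x)
    (hG' : ∀ x ∈ s, G' x < 0) (hG0 : ∀ x ∈ s, G x ≠ 0)
    (hH : ∀ x ∈ s, lhopitalH F G F' G' x ≤ 0) : MonotoneOn (fun x => F x / G x) s := by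
  have hd := fun x hx => hasDerivAt_div_eq_mul_lhopitalH (hF x hx) (hG x hx) (hG0 x hx)
    (hG' x hx).ne
  refine monotoneOn_of_hasDerivWithinAt_nonneg hs
    (fun x hx => (hd x hx).continuousAt.continuousWithinAt)
    (fun x hx => (hd x (interior_subset hx)).hasDerivWithinAt) fun x hx => ?_
  have hx := interior_subset hx
  exact div_nonneg (mul_nonneg_of_nonpos_of_nonpos (hG' x hx).le (hH x hx)) (sq_nonneg _)

lemma antitoneOn_div_of_lhopitalH_nonneg {s : Set ℝ} (hs : Convex ℝ s)
    (hF : ∀ x ∈ s, HasDerivAt F (F' x) x) (hG : ∀ x ∈ s, HasDerivAt G (G' x) x)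
    (hG' : ∀ x ∈ s, G' x < 0) (hG0 : ∀ x ∈ s, G x ≠ 0)
    (hH : ∀ x ∈ s, 0 ≤ lhopitalH F G F' G' x) : AntitoneOn (fun x => F x / G x) s := by
  have hd := fun x hx => hasDerivAt_div_eq_mul_lhopitalH (hF x hx) (hG x hx) (hG0 x hx)
    (hG' x hx).ne
  refine antitoneOn_of_hasDerivWithinAt_nonpos hs
    (fun x hx => (hd x hx).continuousAt.continuousWithinAt)
    (fun x hx => (hd x (interior_subset hx)).hasDerivWithinAt) fun x hx => ?_
  have hx := interior_subset hx
  exact div_nonpos_of_nonpos_of_nonneg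
    (mul_nonpos_of_nonpos_of_nonneg (hG' x hx).le (hH x hx)) (sq_nonneg _)

theorem exists_monotoneOn_antitoneOn_div
    (hF : ∀ x ∈ Ioi (0 : ℝ), HasDerivAt F (F' x) x) (hG : ∀ x ∈ Ioi (0 : ℝ), HasDerivAt G (G' x) x)
    (hG' : ∀ x ∈ Ioi (0 : ℝ), G' x < 0) (hGpos : ∀ x ∈ Ioi (0 : ℝ), 0 < G x)
    (hF0 : Tendsto F atTop (𝓝 0)) (hG0 : Tendsto G atTop (𝓝 0))
    (hRd : DifferentiableOn ℝ (fun x => F' x / G' x) (Ioi 0))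
    (hRq : QuasiconcaveOn ℝ (Ioi 0) (fun x => F' x / G' x))
    (hRm : ¬ MonotoneOn (fun x => F' x / G' x) (Ioi 0))
    (hH : ∃ x > 0, lhopitalH F G F' G' x < 0) :
    ∃ xs > (0 : ℝ), MonotoneOn (fun x => F x / G x) (Ioo 0 xs) ∧
      AntitoneOn (fun x => F x / G x) (Ioi xs) := by
  obtain ⟨v, hv, hRmono, hRanti⟩ := hRq.exists_monotoneOn_antitoneOn hRm
  set R := fun x => F' x / G' x
  have hR : ∀ x ∈ Ioi (0 : ℝ), HasDerivAt R (deriv R x) x := fun x hx =>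
    (hRd.differentiableAt (Ioi_mem_nhds hx)).hasDerivAt
  have hH' : ∀ x ∈ Ioi (0 : ℝ), HasDerivAt (lhopitalH F G F' G') (deriv R x * G x) x :=
    fun x hx => hasDerivAt_lhopitalH (hF x hx) (hG x hx) (hR x hx) (hG' x hx).ne
  have hHmono : MonotoneOn (lhopitalH F G F' G') (Ioc 0 v) := by
    refine monotoneOn_of_hasDerivWithinAt_nonneg (convex_Ioc 0 v)
      (fun x hx => (hH' x hx.1).continuousAt.continuousWithinAt)
      (fun x hx => (hH' x (interior_subset hx).1).hasDerivWithinAt) fun x hx => ?_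
    rw [interior_Ioc] at hx
    rw [← derivWithin_of_isOpen isOpen_Ioo hx]
    exact mul_nonneg hRmono.derivWithin_nonneg (hGpos x hx.1).le
  have hHnn : ∀ x > v, 0 ≤ lhopitalH F G F' G' x := fun x hx => by
    have hx0 : ∀ w ∈ Ici x, w ∈ Ioi (0 : ℝ) := fun w hw => hv.trans_lt (hx.trans_le hw)
    exact lhopitalH_nonneg_of_antitoneOn (fun w hw => hF w (hx0 w hw))
      (fun w hw => hG w (hx0 w hw)) (fun w hw => hG' w (hx0 w hw)) hF0 hG0
      (hRanti.mono (Ici_subset_Ioi.2 hx))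
  obtain ⟨xs, hxs, hneg, hnn⟩ := exists_neg_on_Ioo_nonneg_on_Ioi hHmono hHnn hH
  have h0 : ∀ x > xs, x ∈ Ioi (0 : ℝ) := fun x hx => hxs.trans hx
  exact ⟨xs, hxs,
    monotoneOn_div_of_lhopitalH_nonpos (convex_Ioo 0 xs) (fun x hx => hF x hx.1)
      (fun x hx => hG x hx.1) (fun x hx => hG' x hx.1) (fun x hx => (hGpos x hx.1).ne')
      fun x hx => (hneg x hx).le,
    antitoneOn_div_of_lhopitalH_nonneg (convex_Ioi xs) (fun x hx => hF x (h0 x hx))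
      (fun x hx => hG x (h0 x hx)) (fun x hx => hG' x (h0 x hx))
      (fun x hx => (hGpos x (h0 x hx)).ne') hnn⟩

end LHopital

theorem exists_monotoneOn_antitoneOn_laplaceAlong_div {μ f g : ℝ → ℝ}
    (hμpos : ∀ t ∈ Ioi (0 : ℝ), 0 < μ t) (hμm : AEStronglyMeasurable μ (volume.restrict (Ioi 0)))
    (hμmono : StrictMonoOn μ (Ioi 0)) (hf : LaplaceIntegrable μ f) (hg : LaplaceIntegrable μ g)
    (hgpos : ∀ t ∈ Ioi (0 : ℝ), 0 < g t) (hq : QuasiconcaveOn ℝ (Ioi 0) (fun t => f t / g t))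
    {c : ℝ} (hc : 0 < c) (hinc : StrictMonoOn (fun t => f t / g t) (Ioo 0 c))
    (hH : ∃ x > 0, lhopitalH (laplaceAlong μ f) (laplaceAlong μ g)
      (deriv (laplaceAlong μ f)) (deriv (laplaceAlong μ g)) x < 0) :
    ∃ xs > (0 : ℝ), MonotoneOn (fun x => laplaceAlong μ f x / laplaceAlong μ g x) (Ioo 0 xs) ∧
      AntitoneOn (fun x => laplaceAlong μ f x / laplaceAlong μ g x) (Ioi xs) := by
  have hμ : ∀ t ∈ Ioi (0 : ℝ), 0 ≤ μ t := fun t ht => (hμpos t ht).le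
  have hfμ := hf.mul_mu hμ hμm
  have hgμ := hg.mul_mu hμ hμm
  have hgμpos : ∀ t ∈ Ioi (0 : ℝ), 0 < g t * μ t := fun t ht => mul_pos (hgpos t ht) (hμpos t ht)
  have hρ : EqOn (fun t => f t / g t) (fun t => f t * μ t / (g t * μ t)) (Ioi 0) := fun t ht =>
    (mul_div_mul_right _ _ (hμpos t ht).ne').symm
  set A := laplaceAlong μ (fun t => f t * μ t)
  set B := laplaceAlong μ (fun t => g t * μ t)
  have hR : (fun x => -A x / -B x) = fun x => A x / B x := funext fun x => neg_div_neg_eq _ _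
  have hF := fun x (hx : x ∈ Ioi (0 : ℝ)) => laplaceAlong.hasDerivAt hμ hμm hf hx
  have hG := fun x (hx : x ∈ Ioi (0 : ℝ)) => laplaceAlong.hasDerivAt hμ hμm hg hx
  refine exists_monotoneOn_antitoneOn_div (F' := fun x => -A x) (G' := fun x => -B x) hF hG
    (fun x hx => neg_neg_of_pos (laplaceAlong.pos hgμpos (hgμ x hx)))
    (fun x hx => laplaceAlong.pos hgpos (hg x hx))
    (tendsto_setIntegral_mul_exp_atTop measurableSet_Ioi hμpos fun x hx => hf x (by linarith))
    (tendsto_setIntegral_mul_exp_atTop measurableSet_Ioi hμpos fun x hx => hg x (by linarith))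
    ?_ ?_ ?_ ?_ <;> try rw [hR]
  · exact fun x hx => ((laplaceAlong.hasDerivAt hμ hμm hfμ hx).differentiableAt.div
      (laplaceAlong.hasDerivAt hμ hμm hgμ hx).differentiableAt
      (laplaceAlong.pos hgμpos (hgμ x hx)).ne').differentiableWithinAt
  · exact quasiconcaveOn_laplaceAlong_div hμ hμm hμmono hfμ hgμ hgμpos (hq.congr hρ)
  · exact not_monotoneOn_laplaceAlong_div hμmono hfμ hgμ hgμpos hc
      (hinc.congr (hρ.mono Ioo_subset_Ioi_self))
  · obtain ⟨x, hx0, hx⟩ := hH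
    rw [lhopitalH, (hF x hx0).deriv, (hG x hx0).deriv] at hx
    exact ⟨x, hx0, hx⟩

theorem stmt_8_general (f g μ : ℝ → ℝ)
    (hf : ContinuousOn f (Ioi 0)) (hg : ContinuousOn g (Ioi 0))
    (hgpos : ∀ t ∈ Ioi (0 : ℝ), 0 < g t)
    (hμpos : ∀ t ∈ Ioi (0 : ℝ), 0 < μ t)
    (hμdiff : DifferentiableOn ℝ μ (Ioi 0))
    (hμmono : StrictMonoOn μ (Ioi 0))
    (hfint : ∀ x > (0 : ℝ), IntegrableOn (fun t => f t * Real.exp (-x * μ t)) (Ioi 0))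
    (hgint : ∀ x > (0 : ℝ), IntegrableOn (fun t => g t * Real.exp (-x * μ t)) (Ioi 0))
    (F G : ℝ → ℝ)
    (hF : ∀ x, F x = ∫ t in Ioi (0 : ℝ), f t * Real.exp (-x * μ t))
    (hG : ∀ x, G x = ∫ t in Ioi (0 : ℝ), g t * Real.exp (-x * μ t))
    (tstar : ℝ) (htstar : tstar ∈ Ioi (0 : ℝ))
    (hinc : StrictMonoOn (fun t => f t / g t) (Ioo 0 tstar))
    (hdec : StrictAntiOn (fun t => f t / g t) (Ioi tstar))
    (L : ℝ) (hLneg : L < 0)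
    (hL : Tendsto (fun x => deriv F x / deriv G x * G x - F x)
      (𝓝[>] (0 : ℝ)) (𝓝 L)) :
    ∃ xstar > (0 : ℝ), MonotoneOn (fun x => F x / G x) (Ioo 0 xstar) ∧
      AntitoneOn (fun x => F x / G x) (Ioi xstar) := by
  have hμm : AEStronglyMeasurable μ (volume.restrict (Ioi 0)) :=
    hμdiff.continuousOn.aestronglyMeasurable measurableSet_Ioi
  have hq := quasiconcaveOn_Ioi_of_strictMonoOn_strictAntiOn htstar
    ((hf.div hg fun t ht => (hgpos t ht).ne').continuousAt (Ioi_mem_nhds htstar)) hinc hdec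
  obtain rfl : F = laplaceAlong μ f := funext hF
  obtain rfl : G = laplaceAlong μ g := funext hG
  obtain ⟨x, hx, hx0⟩ := ((hL.eventually_lt_const hLneg).and self_mem_nhdsWithin).exists
  exact exists_monotoneOn_antitoneOn_laplaceAlong_div hμpos hμm hμmono hfint hgint hgpos hq
    htstar hinc ⟨x, hx0, hx⟩

theorem stmt_8 (f g μ : ℝ → ℝ)
    (hf : ContinuousOn f (Ioi 0)) (hg : ContinuousOn g (Ioi 0))
    (hgpos : ∀ t ∈ Ioi (0 : ℝ), 0 < g t)
    (hμpos : ∀ t ∈ Ioi (0 : ℝ), 0 < μ t)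
    (hμdiff : DifferentiableOn ℝ μ (Ioi 0))
    (hμmono : StrictMonoOn μ (Ioi 0))
    (μ0 : ℝ) (hμ0 : Tendsto μ (𝓝[>] (0 : ℝ)) (𝓝 μ0))
    (hμonto : μ '' Ioi 0 = Ioi μ0)
    (hfint : ∀ x > (0 : ℝ), IntegrableOn (fun t => f t * Real.exp (-x * μ t)) (Ioi 0))
    (hgint : ∀ x > (0 : ℝ), IntegrableOn (fun t => g t * Real.exp (-x * μ t)) (Ioi 0))
    (F G : ℝ → ℝ)
    (hF : ∀ x, F x = ∫ t in Ioi (0 : ℝ), f t * Real.exp (-x * μ t))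
    (hG : ∀ x, G x = ∫ t in Ioi (0 : ℝ), g t * Real.exp (-x * μ t))
    (tstar : ℝ) (htstar : tstar ∈ Ioi (0 : ℝ))
    (hinc : StrictMonoOn (fun t => f t / g t) (Ioo 0 tstar))
    (hdec : StrictAntiOn (fun t => f t / g t) (Ioi tstar))
    (L : ℝ) (hLneg : L < 0)
    (hL : Tendsto (fun x => deriv F x / deriv G x * G x - F x)
      (𝓝[>] (0 : ℝ)) (𝓝 L)) :
    ∃ xstar > (0 : ℝ), MonotoneOn (fun x => F x / G x) (Ioo 0 xstar) ∧
      AntitoneOn (fun x => F x / G x) (Ioi xstar) :=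
  stmt_8_general f g μ hf hg hgpos hμpos hμdiff hμmono hfint hgint F G hF hG tstar htstar hinc hdec
    L hLneg hL
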